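/- Let G be the adjacency matrix of a finite simple graph on n vertices with at least one edge, and let ω be the clique number of the graph. If σ ∈ ℝ^n has σ_i ≥ 0 for all i, Σ_i σ_i = 1, and there is a constant c with (G·σ)_i = c for every i with σ_i > 0, then c ≤ (ω − 1)/ω. -/
import Mathlib


open Matrix

/-- if `G` is the adjacency matrix of a simple graph with at least one edge
and clique number `ω`, then any allocation `σ ≥ 0` summing to one that satisfies the
balanced neighborhood equity condition with constant `c` has `c ≤ (ω − 1)/ω`. -/
theorem statement_10 {n : ℕ} (G : Matrix (Fin n) (Fin n) ℝ)
    (hG_symm : G.IsSymm)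
    (hG_01 : ∀ i j, G i j = 0 ∨ G i j = 1)
    (hG_diag : ∀ i, G i i = 0)
    (hG_edge : ∃ i j, G i j = 1)
    (ω : ℕ)
    (hclique : ∃ K : Finset (Fin n),
      (∀ i ∈ K, ∀ j ∈ K, i ≠ j → G i j = 1) ∧ K.card = ω)
    (hmax : ∀ K : Finset (Fin n),
      (∀ i ∈ K, ∀ j ∈ K, i ≠ j → G i j = 1) → K.card ≤ ω)
    (σ : Fin n → ℝ) (hσnn : ∀ i, 0 ≤ σ i) (hσsum : ∑ i, σ i = 1)
    (c : ℝ) (hbal : ∀ i, 0 < σ i → G.mulVec σ i = c) :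
    c ≤ ((ω : ℝ) - 1) / ω := by
  have hsymm : ∀ a b, G a b = G b a := fun a b => hG_symm.apply b a
  -- ω ≥ 2
  obtain ⟨i0, j0, hij0⟩ := hG_edge
  have hi0j0 : i0 ≠ j0 := by
    rintro rfl; rw [hG_diag] at hij0; norm_num at hij0
  have hω2 : 2 ≤ ω := by
    have h := hmax {i0, j0} ?_
    · simpa [Finset.card_insert_of_notMem, hi0j0] using h
    · intro a ha b hb hab
      simp only [Finset.mem_insert, Finset.mem_singleton] at ha hb
      rcases ha with rfl | rfl <;> rcases hb with rfl | rfl <;>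
        first | exact absurd rfl hab | exact hij0 | (rw [hsymm]; exact hij0)
  have hω0 : (0:ℝ) < ω := by positivity
  -- key: Motzkin–Straus upper bound, by strong induction on support size
  have key : ∀ k : ℕ, ∀ τ : Fin n → ℝ, (∀ i, 0 ≤ τ i) → ∑ i, τ i = 1 →
      (Finset.univ.filter (fun i => τ i ≠ 0)).card ≤ k →
      τ ⬝ᵥ G.mulVec τ ≤ 1 - 1/ω := by
    intro k
    induction k with
    | zero =>
      intro τ hnn hsum hcard
      exfalso
      have hempty : (Finset.univ.filter (fun i => τ i ≠ 0)) = ∅ :=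
        Finset.card_eq_zero.mp (Nat.le_zero.mp hcard)
      have : ∀ i, τ i = 0 := by
        intro i
        by_contra h
        have : i ∈ (Finset.univ.filter (fun i => τ i ≠ 0)) := by simp [h]
        simp [hempty] at this
      simp [this] at hsum
    | succ k ih =>
      intro τ hnn hsum hcard
      set S := Finset.univ.filter (fun i => τ i ≠ 0) with hS
      have hsumS : ∑ i ∈ S, τ i = 1 := by
        rw [← hsum]
        refine Finset.sum_subset (Finset.subset_univ S) ?_
        intro i _ hi
        by_contra h
        exact hi (by simp [hS, h])
      by_cases hcl : ∀ i ∈ S, ∀ j ∈ S, i ≠ j → G i j = 1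
      · -- support is a clique
        have hScard : S.card ≤ ω := hmax S hcl
        have hSne : S.Nonempty := by
          by_contra h
          rw [Finset.not_nonempty_iff_eq_empty] at h
          rw [h] at hsumS; simp at hsumS
        have hval : τ ⬝ᵥ G.mulVec τ = 1 - ∑ i ∈ S, (τ i)^2 := by
          have h1 : τ ⬝ᵥ G.mulVec τ = ∑ i ∈ S, ∑ j ∈ S, τ i * (G i j * τ j) := by
            rw [dotProduct]
            simp only [mulVec, dotProduct]
            rw [← Finset.sum_subset (Finset.subset_univ S) (by
              intro i _ hi
              have : τ i = 0 := by by_contra h; exact hi (by simp [hS, h])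
              simp [this])]
            refine Finset.sum_congr rfl fun i _ => ?_
            rw [Finset.mul_sum, ← Finset.sum_subset (Finset.subset_univ S) (by
              intro j _ hj
              have : τ j = 0 := by by_contra h; exact hj (by simp [hS, h])
              simp [this])]
          rw [h1]
          have h2 : ∀ i ∈ S, ∑ j ∈ S, τ i * (G i j * τ j) = τ i * (1 - τ i) := by
            intro i hi
            rw [← Finset.add_sum_erase _ _ hi]
            rw [hG_diag i]
            have : ∑ j ∈ S.erase i, τ i * (G i j * τ j)
                = ∑ j ∈ S.erase i, τ i * τ j := by
              refine Finset.sum_congr rfl fun j hj => ?_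
              rw [hcl i hi j (Finset.mem_of_mem_erase hj)
                (fun h => (Finset.ne_of_mem_erase hj) h.symm), one_mul]
            rw [this, ← Finset.mul_sum, Finset.sum_erase_eq_sub hi, hsumS]
            ring
          rw [Finset.sum_congr rfl h2]
          have : ∑ i ∈ S, τ i * (1 - τ i) = (∑ i ∈ S, τ i) - ∑ i ∈ S, (τ i)^2 := by
            rw [← Finset.sum_sub_distrib]
            refine Finset.sum_congr rfl fun i _ => by ring
          rw [this, hsumS]
        rw [hval]
        have hcs : (1:ℝ) ≤ S.card * ∑ i ∈ S, (τ i)^2 := by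
          have := sq_sum_le_card_mul_sum_sq (s := S) (f := τ)
          rw [hsumS] at this; simpa using this
        have hSpos : (0:ℝ) < S.card := by
          have := hSne.card_pos; positivity
        have hsq : (1:ℝ)/ω ≤ ∑ i ∈ S, (τ i)^2 := by
          have hcard' : (S.card : ℝ) ≤ ω := by exact_mod_cast hScard
          have hsum2 : (1:ℝ) ≤ ω * ∑ i ∈ S, (τ i)^2 := by
            refine hcs.trans ?_
            have hnn2 : (0:ℝ) ≤ ∑ i ∈ S, (τ i)^2 := by positivity
            exact mul_le_mul_of_nonneg_right hcard' hnn2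
          rw [div_le_iff₀ hω0] at *
          linarith [hsum2]
        linarith
      · -- support not a clique: shift weight
        push_neg at hcl
        obtain ⟨i, hiS, j, hjS, hij, hGij1⟩ := hcl
        have hGij : G i j = 0 := (hG_01 i j).resolve_right hGij1
        have hGji : G j i = 0 := by rw [hsymm]; exact hGij
        have hτi : τ i ≠ 0 := by simpa [hS] using hiS
        have hτj : τ j ≠ 0 := by simpa [hS] using hjS
        -- generic shifting step
        have step : ∀ a b : Fin n, a ≠ b → τ a ≠ 0 → τ b ≠ 0 → a ∈ S → b ∈ S →
            G a b = 0 → G.mulVec τ a ≤ G.mulVec τ b →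
            τ ⬝ᵥ G.mulVec τ ≤ 1 - 1/ω := by
          intro a b hab hτa hτb haS hbS hGab hle
          set t := τ a with ht
          set v : Fin n → ℝ := fun k => (if k = b then 1 else 0) - (if k = a then 1 else 0)
            with hv
          set τ' : Fin n → ℝ := fun k => τ k + t * v k with hτ'
          have hτ'a : τ' a = 0 := by
            simp [hτ', hv, t, Ne.symm hab, hab]
          have hτ'b : τ' b = τ b + t := by
            simp [hτ', hv, Ne.symm hab]
          have hτ'other : ∀ k, k ≠ a → k ≠ b → τ' k = τ k := by
            intro k hka hkb; simp [hτ', hv, hka, hkb]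
          have hnn' : ∀ k, 0 ≤ τ' k := by
            intro k
            by_cases hka : k = a
            · rw [hka, hτ'a]
            · by_cases hkb : k = b
              · rw [hkb, hτ'b]; have := hnn a; have := hnn b; simp [t]; linarith
              · rw [hτ'other k hka hkb]; exact hnn k
          have hsum' : ∑ i, τ' i = 1 := by
            simp only [hτ', hv]
            rw [Finset.sum_add_distrib, hsum]
            rw [← Finset.mul_sum, Finset.sum_sub_distrib]
            simp [Finset.sum_ite_eq']
          have hcard' : (Finset.univ.filter (fun i => τ' i ≠ 0)).card ≤ k := by
            have hsub : (Finset.univ.filter (fun i => τ' i ≠ 0)) ⊆ S.erase a := by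
              intro x hx
              simp only [Finset.mem_filter, Finset.mem_univ, true_and] at hx
              rw [Finset.mem_erase]
              constructor
              · rintro rfl; exact hx hτ'a
              · by_cases hxa : x = a
                · exact absurd (hxa ▸ hτ'a) hx
                · by_cases hxb : x = b
                  · exact hxb ▸ hbS
                  · rw [hτ'other x hxa hxb] at hx; simp [hS, hx]
            calc (Finset.univ.filter (fun i => τ' i ≠ 0)).card
                ≤ (S.erase a).card := Finset.card_le_card hsub
              _ = S.card - 1 := Finset.card_erase_of_mem haS
              _ ≤ k := by omega
          -- value comparison
          have hGv : ∀ x, G.mulVec v x = G x b - G x a := by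
            intro x
            simp only [mulVec, dotProduct, hv, mul_sub, Finset.sum_sub_distrib,
              mul_ite, mul_one, mul_zero]
            simp [Finset.sum_ite_eq']
          have hvw : ∀ w : Fin n → ℝ, v ⬝ᵥ w = w b - w a := by
            intro w
            simp only [dotProduct, hv, sub_mul, Finset.sum_sub_distrib, ite_mul,
              one_mul, zero_mul]
            simp [Finset.sum_ite_eq]
          have hτGv : τ ⬝ᵥ G.mulVec v = G.mulVec τ b - G.mulVec τ a := by
            rw [dotProduct]
            have heach : ∀ x, τ x * G.mulVec v x = G b x * τ x - G a x * τ x := by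
              intro x; rw [hGv x, hsymm x b, hsymm x a]; ring
            simp only [heach, Finset.sum_sub_distrib]
            simp [mulVec, dotProduct]
          have hvGτ : v ⬝ᵥ G.mulVec τ = G.mulVec τ b - G.mulVec τ a := hvw _
          have hvGv : v ⬝ᵥ G.mulVec v = 0 := by
            rw [hvw, hGv, hGv, hG_diag, hG_diag, hGab, hsymm b a, hGab]
            ring
          have hexp : τ' ⬝ᵥ G.mulVec τ'
              = τ ⬝ᵥ G.mulVec τ + 2 * t * (G.mulVec τ b - G.mulVec τ a) := by
            have : τ' = τ + t • v := by
              funext x; simp [hτ']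
            rw [this, mulVec_add, mulVec_smul, dotProduct_add, add_dotProduct,
              add_dotProduct, dotProduct_smul, smul_dotProduct, smul_dotProduct,
              dotProduct_smul, hτGv, hvGτ, hvGv]
            simp [smul_eq_mul]; ring
          have hτnn : 0 ≤ t := hnn a
          have hle2 : τ ⬝ᵥ G.mulVec τ ≤ τ' ⬝ᵥ G.mulVec τ' := by
            rw [hexp]
            nlinarith
          exact hle2.trans (ih τ' hnn' hsum' hcard')
        rcases le_total (G.mulVec τ i) (G.mulVec τ j) with h | h
        · exact step i j hij hτi hτj hiS hjS hGij h
        · exact step j i (Ne.symm hij) hτj hτi hjS hiS hGji h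
  -- c equals the quadratic form value
  have hc : c = σ ⬝ᵥ G.mulVec σ := by
    have : σ ⬝ᵥ G.mulVec σ = ∑ i, σ i * c := by
      rw [dotProduct]
      refine Finset.sum_congr rfl fun i _ => ?_
      rcases lt_or_eq_of_le (hσnn i) with h | h
      · rw [hbal i h]
      · rw [← h]; ring
    rw [this, ← Finset.sum_mul, hσsum, one_mul]
  have hbound : σ ⬝ᵥ G.mulVec σ ≤ 1 - 1/ω :=
    key n σ hσnn hσsum (by
      calc (Finset.univ.filter (fun i => σ i ≠ 0)).card
          ≤ Finset.univ.card := Finset.card_le_card (Finset.filter_subset _ _)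
        _ = n := by simp)
  rw [hc]
  have : ((ω:ℝ) - 1)/ω = 1 - 1/ω := by field_simp
  rw [this]
  exact hbound
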